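/- Let q ∈ (-1,1], q ≠ 0. For all natural numbers n and m with m ≤ n, the inversion (orthogonality) relations hold: Σ_{k=m}^{n} s(n,k,q) S(k,m,q) = δ_{n,m} and Σ_{k=m}^{n} S(n,k,q) s(k,m,q) = δ_{n,m}, where δ_{n,m} is the Kronecker delta. -/

import Mathlib

/-!
Both sums are entries of products of the lower-triangular matrices `s = (s(i,k))` and
`S = (S(k,j))`, indexed by `0 ≤ i, j, k < N` for any `N > n, m`. The identity `s S = 1` follows
by induction on the row index from the two recurrences; the factor `q^(-n)` of the first-kind
recurrence cancels the `q^m` of the second-kind one, and the two `[n]` terms cancel. Since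
these are square matrices over a field, `s S = 1` forces `S s = 1`.
-/

open Finset

/-- The q-integer `[m] = (1 - q^m)/(1 - q)`, with `[m] = m` when `q = 1`. -/
noncomputable def qInt (q : ℝ) (m : ℤ) : ℝ := if q = 1 then m else (1 - q ^ m) / (1 - q)

/-- The q-factorial `[n]! = [n][n-1]⋯[1]`, `[0]! = 1`. -/
noncomputable def qFact (q : ℝ) : ℕ → ℝ
  | 0 => 1
  | n + 1 => qInt q (n + 1) * qFact q n

/-- The q-binomial coefficient `(n choose k)_q = [n]!/([n-k]![k]!)`. -/
noncomputable def qBinom (q : ℝ) (n k : ℕ) : ℝ := qFact q n / (qFact q (n - k) * qFact q k)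

/-- The q-deformed Stirling numbers of the second kind, defined by the recurrence
`S(n+1,k,q) = q^(k-1) S(n,k-1,q) + [k] S(n,k,q)`, with `S(0,0,q)=1`, `S(n,0,q)=0` for `n ≥ 1`,
and `S(n,k,q) = 0` for `k > n`. -/
noncomputable def qStirling2 (q : ℝ) : ℕ → ℕ → ℝ
  | 0, 0 => 1
  | 0, _ + 1 => 0
  | _ + 1, 0 => 0
  | n + 1, k + 1 => q ^ k * qStirling2 q n k + qInt q (k + 1) * qStirling2 q n (k + 1)

/-- The q-deformed Stirling numbers of the first kind, defined by the recurrence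
`s(n+1,k,q) = q^(-n) (s(n,k-1,q) - [n] s(n,k,q))`, with `s(0,0,q)=1`, `s(n,0,q)=0` for `n ≥ 1`,
and `s(n,k,q) = 0` for `k > n`. -/
noncomputable def qStirling1 (q : ℝ) : ℕ → ℕ → ℝ
  | 0, 0 => 1
  | 0, _ + 1 => 0
  | _ + 1, 0 => 0
  | n + 1, k + 1 => q ^ (-(n : ℤ)) * (qStirling1 q n k - qInt q n * qStirling1 q n (k + 1))

theorem sum_Icc_eq_sum_range {M : Type*} [AddCommMonoid M] {f : ℕ → M} {m n N : ℕ}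
    (hlt : ∀ k < m, f k = 0) (hgt : ∀ k, n < k → f k = 0) (hN : n < N) :
    ∑ k ∈ Icc m n, f k = ∑ k ∈ range N, f k := by
  refine sum_subset (fun k hk => by simp only [mem_Icc, mem_range] at hk ⊢; omega)
    fun k _ hk => ?_
  by_cases hkm : k < m
  · exact hlt k hkm
  · exact hgt k (by simp only [mem_Icc, not_and, not_le] at hk; omega)

variable {q : ℝ}

theorem qStirling2_eq_zero_of_lt {n k : ℕ} (h : n < k) : qStirling2 q n k = 0 := by
  induction n generalizing k with
  | zero => obtain ⟨k, rfl⟩ := Nat.exists_eq_add_one_of_ne_zero (by omega : k ≠ 0); rfl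
  | succ n ih =>
    obtain ⟨k, rfl⟩ := Nat.exists_eq_add_one_of_ne_zero (by omega : k ≠ 0)
    simp [qStirling2, ih (by omega : n < k), ih (by omega : n < k + 1)]

theorem qStirling1_eq_zero_of_lt {n k : ℕ} (h : n < k) : qStirling1 q n k = 0 := by
  induction n generalizing k with
  | zero => obtain ⟨k, rfl⟩ := Nat.exists_eq_add_one_of_ne_zero (by omega : k ≠ 0); rfl
  | succ n ih =>
    obtain ⟨k, rfl⟩ := Nat.exists_eq_add_one_of_ne_zero (by omega : k ≠ 0)
    simp [qStirling1, ih (by omega : n < k), ih (by omega : n < k + 1)]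

theorem sum_range_qStirling1_mul_qStirling2 (hq0 : q ≠ 0) {n N : ℕ} (hn : n < N) (m : ℕ) :
    ∑ k ∈ range N, qStirling1 q n k * qStirling2 q k m = if n = m then 1 else 0 := by
  induction n generalizing N m with
  | zero =>
    obtain ⟨N, rfl⟩ := Nat.exists_eq_add_one_of_ne_zero (by omega : N ≠ 0)
    rw [sum_range_succ']
    cases m <;> simp [qStirling1, qStirling2]
  | succ n ih =>
    obtain ⟨N, rfl⟩ := Nat.exists_eq_add_one_of_ne_zero (by omega : N ≠ 0)
    rw [sum_range_succ']
    cases m with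
    | zero => simp [qStirling1, qStirling2]
    | succ m =>
      have expand (i : ℕ) : qStirling1 q (n + 1) (i + 1) * qStirling2 q (i + 1) (m + 1) =
          q ^ (-(n : ℤ)) * (q ^ m * (qStirling1 q n i * qStirling2 q i m)
            + qInt q (m + 1) * (qStirling1 q n i * qStirling2 q i (m + 1))
            - qInt q n * (qStirling1 q n (i + 1) * qStirling2 q (i + 1) (m + 1))) := by
        simp only [qStirling1, qStirling2]
        ring
      have shifted := ih (N := N + 1) (by omega) (m + 1)
      rw [sum_range_succ', show qStirling2 q 0 (m + 1) = 0 from rfl, mul_zero, add_zero]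
        at shifted
      rw [show qStirling1 q (n + 1) 0 = 0 from rfl, zero_mul, add_zero]
      simp only [expand, ← mul_sum, sum_add_distrib, sum_sub_distrib, shifted,
        ih (by omega : n < N)]
      by_cases hnm : n = m
      · subst hnm
        simp [hq0]
      · by_cases hnm' : n = m + 1
        · subst hnm'
          simp
        · simp [hnm, hnm']

variable (q) in
noncomputable def qStirling1Matrix (N : ℕ) : Matrix (Fin N) (Fin N) ℝ :=
  Matrix.of fun i j => qStirling1 q i j

variable (q) in
noncomputable def qStirling2Matrix (N : ℕ) : Matrix (Fin N) (Fin N) ℝ :=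
  Matrix.of fun i j => qStirling2 q i j

theorem qStirling1Matrix_mul_qStirling2Matrix (hq0 : q ≠ 0) (N : ℕ) :
    qStirling1Matrix q N * qStirling2Matrix q N = 1 := by
  ext i j
  simp only [Matrix.mul_apply, Matrix.one_apply, qStirling1Matrix, qStirling2Matrix,
    Matrix.of_apply, Fin.sum_univ_eq_sum_range (fun k => qStirling1 q i k * qStirling2 q k j),
    sum_range_qStirling1_mul_qStirling2 hq0 i.isLt, Fin.val_inj]

theorem sum_range_qStirling2_mul_qStirling1 (hq0 : q ≠ 0) {n m N : ℕ} (hn : n < N)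
    (hm : m < N) :
    ∑ k ∈ range N, qStirling2 q n k * qStirling1 q k m = if n = m then 1 else 0 := by
  have h := congr_fun₂ (mul_eq_one_comm (M := Matrix (Fin N) (Fin N) ℝ) |>.mp
    (qStirling1Matrix_mul_qStirling2Matrix hq0 N)) ⟨n, hn⟩ ⟨m, hm⟩
  simpa only [Matrix.mul_apply, Matrix.one_apply, qStirling1Matrix, qStirling2Matrix,
    Matrix.of_apply, Fin.sum_univ_eq_sum_range (fun k => qStirling2 q n k * qStirling1 q k m),
    Fin.mk.injEq] using h

theorem qStirling_orthogonality_general (q : ℝ) (hq0 : q ≠ 0)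
    (n m : ℕ) :
    (∑ k ∈ Finset.Icc m n, qStirling1 q n k * qStirling2 q k m) =
      (if n = m then (1 : ℝ) else 0) ∧
    (∑ k ∈ Finset.Icc m n, qStirling2 q n k * qStirling1 q k m) =
      (if n = m then (1 : ℝ) else 0) := by
  have hn : n < n + m + 1 := by omega
  have hm : m < n + m + 1 := by omega
  constructor
  · rw [sum_Icc_eq_sum_range (fun k hk => by rw [qStirling2_eq_zero_of_lt hk, mul_zero])
      (fun k hk => by rw [qStirling1_eq_zero_of_lt hk, zero_mul]) hn]
    exact sum_range_qStirling1_mul_qStirling2 hq0 hn m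
  · rw [sum_Icc_eq_sum_range (fun k hk => by rw [qStirling1_eq_zero_of_lt hk, mul_zero])
      (fun k hk => by rw [qStirling2_eq_zero_of_lt hk, zero_mul]) hn]
    exact sum_range_qStirling2_mul_qStirling1 hq0 hn hm

theorem qStirling_orthogonality (q : ℝ) (hq0 : q ≠ 0) (hq : q ∈ Set.Ioc (-1 : ℝ) 1)
    (n m : ℕ) (hmn : m ≤ n) :
    (∑ k ∈ Finset.Icc m n, qStirling1 q n k * qStirling2 q k m) =
      (if n = m then (1 : ℝ) else 0) ∧
    (∑ k ∈ Finset.Icc m n, qStirling2 q n k * qStirling1 q k m) =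
      (if n = m then (1 : ℝ) else 0) :=
  qStirling_orthogonality_general q hq0 n m
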